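/- arXiv:1401.2118 — 6 statements merged into one kernel-verified Lean document; each statement's English description precedes it below -/
import Mathlib

section
/- Let S, Q ≥ 1 and let Y = (Y_1,...,Y_Q) be a multinomial random vector with S trials and uniform cell probabilities 1/Q. Then the Shannon entropy (base 2) of Y equals Q · ∑_{i=0}^{S} C(S,i) (1/Q)^i (1 - 1/Q)^{S-i} log₂(i!) − log₂(S!/Q^S). -/
/-!
The probability of `y` is `S! / (∏ j, y j!) · Q⁻ˢ`, so `-log₂` of it is
`∑ j, log₂ (y j)! - log₂ (S! / Qˢ)`, and the entropy is `∑ j, E[log₂ Y_j!] - log₂ (S! / Qˢ)`.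
Each coordinate `Y_j` of a multinomial vector is binomial with parameters `S` and `1/Q`, so the
`Q` expectations are all equal to the binomial sum on the right-hand side.
-/

open Finset Real
open scoped Nat

theorem prod_pow_eq_pow_of_mem_piAntidiag {ι M : Type*} [DecidableEq ι] [CommMonoid M]
    {s : Finset ι} {n : ℕ} {k : ι → ℕ} (hk : k ∈ piAntidiag s n) (c : M) :
    ∏ j ∈ s, c ^ k j = c ^ n := by
  rw [prod_pow_eq_pow_sum, (mem_piAntidiag.1 hk).1]

section Multinomial

variable {ι R : Type*} [DecidableEq ι]

theorem sum_piAntidiag_multinomial_mul_prod_pow_mul_apply [CommSemiring R] {a : ι}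
    {s : Finset ι} (ha : a ∈ s) (p : ι → R) (f : ℕ → R) (n : ℕ) :
    ∑ k ∈ piAntidiag s n, Nat.multinomial s k * (∏ j ∈ s, p j ^ k j) * f (k a)
      = ∑ i ∈ range (n + 1),
          n.choose i * p a ^ i * (∑ j ∈ s.erase a, p j) ^ (n - i) * f i := by
  -- Fixing `k a = i`, the remaining coordinates are multinomial on `s.erase a`, of total weight
  -- `(∑ j ∈ s.erase a, p j) ^ (n - i)` by the multinomial theorem.
  obtain ⟨t, hat, rfl⟩ : ∃ t, ∃ hat : a ∉ t, s = t.cons a hat :=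
    ⟨s.erase a, notMem_erase a s, by simp [ha]⟩
  rw [erase_cons, piAntidiag_cons, sum_disjiUnion, ← Finset.Nat.sum_antidiagonal_eq_sum_range_succ
    fun i m => n.choose i * p a ^ i * (∑ j ∈ t, p j) ^ m * f i]
  refine sum_congr rfl fun x hx => ?_
  rw [HasAntidiagonal.mem_antidiagonal] at hx
  rw [sum_map, sum_pow_eq_sum_piAntidiag, mul_sum, sum_mul]
  refine sum_congr rfl fun k hk => ?_
  rw [mem_piAntidiag] at hk
  have hka : k a = 0 := by_contra fun h => hat (hk.2 a h)
  have hkt : ∀ j ∈ t, (k + fun j => if j = a then x.1 else 0) j = k j := fun j hj => by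
    simp [show j ≠ a from fun h => hat (h ▸ hj)]
  simp only [addRightEmbedding_apply]
  rw [Nat.multinomial_cons, prod_cons, Nat.multinomial_congr hkt,
    prod_congr rfl fun j hj => by rw [hkt j hj], sum_congr rfl hkt, hk.1]
  simp only [Pi.add_apply, hka, if_true, zero_add, hx]
  push_cast
  ring

variable [Fintype ι] [Field R] [CharZero R]

theorem sum_multinomial_mul_inv_card_pow [Nonempty ι] (n : ℕ) :
    ∑ k ∈ piAntidiag (univ : Finset ι) n,
      (Nat.multinomial univ k : R) * (1 / Fintype.card ι) ^ n = 1 := by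
  rw [sum_congr rfl fun k hk => by rw [← prod_pow_eq_pow_of_mem_piAntidiag hk],
    ← sum_pow_eq_sum_piAntidiag, sum_const, card_univ, nsmul_eq_mul, mul_one_div_cancel
      (Nat.cast_ne_zero.2 Fintype.card_ne_zero), one_pow]

theorem sum_multinomial_mul_inv_card_pow_mul_apply (a : ι) (f : ℕ → R) (n : ℕ) :
    ∑ k ∈ piAntidiag (univ : Finset ι) n,
        (Nat.multinomial univ k : R) * (1 / Fintype.card ι) ^ n * f (k a)
      = ∑ i ∈ range (n + 1), n.choose i * (1 / Fintype.card ι : R) ^ i *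
          (1 - 1 / Fintype.card ι) ^ (n - i) * f i := by
  have : Nonempty ι := ⟨a⟩
  have hrest : ∑ _ ∈ univ.erase a, (1 / Fintype.card ι : R) = 1 - 1 / Fintype.card ι := by
    rw [sum_const, card_erase_of_mem (mem_univ a), card_univ, nsmul_eq_mul,
      Nat.cast_sub Fintype.card_pos, Nat.cast_one]
    field_simp
  rw [sum_congr rfl fun k hk => by rw [← prod_pow_eq_pow_of_mem_piAntidiag hk],
    sum_piAntidiag_multinomial_mul_prod_pow_mul_apply (mem_univ a), hrest]

end Multinomial

theorem Real.logb_multinomial {ι : Type*} (b : ℝ) (s : Finset ι) (k : ι → ℕ) :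
    logb b (Nat.multinomial s k) = logb b (∑ j ∈ s, k j)! - ∑ j ∈ s, logb b (k j)! := by
  have hspec : (∏ j ∈ s, ((k j)! : ℝ)) * Nat.multinomial s k = (∑ j ∈ s, k j)! := by
    exact_mod_cast Nat.multinomial_spec s k
  rw [← hspec, logb_mul (by positivity) (mod_cast (Nat.multinomial_pos s k).ne'),
    logb_prod _ _ fun j _ => by positivity]
  ring

theorem entropy_uniform_multinomial_general (Q S : ℕ) (hQ : 1 ≤ Q) :
    ∑ y ∈ Finset.Nat.antidiagonalTuple Q S,
        -(((Nat.multinomial Finset.univ y : ℝ) * (1 / Q) ^ S) *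
          Real.logb 2 ((Nat.multinomial Finset.univ y : ℝ) * (1 / Q) ^ S))
    = (Q : ℝ) * ∑ i ∈ Finset.range (S + 1),
          (S.choose i : ℝ) * (1 / Q) ^ i * (1 - 1 / Q) ^ (S - i) *
            Real.logb 2 (Nat.factorial i)
      - Real.logb 2 ((Nat.factorial S : ℝ) / Q ^ S) := by
  have : Nonempty (Fin Q) := ⟨⟨0, hQ⟩⟩
  have hterm : ∀ y ∈ piAntidiag (univ : Finset (Fin Q)) S,
      -((Nat.multinomial univ y : ℝ) * (1 / Q) ^ S *
          logb 2 ((Nat.multinomial univ y : ℝ) * (1 / Q) ^ S))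
        = (Nat.multinomial univ y : ℝ) * (1 / Q) ^ S * ∑ j, logb 2 (y j)!
          - (Nat.multinomial univ y : ℝ) * (1 / Q) ^ S * logb 2 ((S ! : ℝ) / Q ^ S) := by
    intro y hy
    rw [logb_mul (mod_cast (Nat.multinomial_pos _ y).ne') (by positivity), logb_multinomial,
      (mem_piAntidiag.1 hy).1, logb_div (by positivity) (by positivity), one_div, inv_pow,
      logb_inv, logb_pow]
    ring
  have hmass := sum_multinomial_mul_inv_card_pow (R := ℝ) (ι := Fin Q) S
  have hmarginal (j : Fin Q) :=
    sum_multinomial_mul_inv_card_pow_mul_apply j (fun i => logb 2 (i ! : ℝ)) S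
  simp only [Fintype.card_fin] at hmass hmarginal
  rw [← piAntidiag_univ_fin_eq_antidiagonalTuple, sum_congr rfl hterm, sum_sub_distrib,
    ← sum_mul, hmass, one_mul, sum_congr rfl fun y _ => mul_sum .., sum_comm,
    sum_congr rfl fun j _ => hmarginal j, sum_const, card_univ, Fintype.card_fin, nsmul_eq_mul]

/-- The entropy (base 2) of a multinomial random vector with `S` trials and
uniform cell probabilities `1/Q`. -/
theorem entropy_uniform_multinomial (Q S : ℕ) (hQ : 1 ≤ Q) (hS : 1 ≤ S) :
    ∑ y ∈ Finset.Nat.antidiagonalTuple Q S,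
        -(((Nat.multinomial Finset.univ y : ℝ) * (1 / Q) ^ S) *
          Real.logb 2 ((Nat.multinomial Finset.univ y : ℝ) * (1 / Q) ^ S))
    = (Q : ℝ) * ∑ i ∈ Finset.range (S + 1),
          (S.choose i : ℝ) * (1 / Q) ^ i * (1 - 1 / Q) ^ (S - i) *
            Real.logb 2 (Nat.factorial i)
      - Real.logb 2 ((Nat.factorial S : ℝ) / Q ^ S) :=
  entropy_uniform_multinomial_general Q S hQ
end

section
/- Let S ≥ 2 users each independently choose a symbol in {1,...,Q} with common probabilities p_1,...,p_Q (p_j ≥ 0, ∑ p_j = 1), let X denote the choice of user 1 and Y the vector of occupancy counts of all S users. Then the mutual information I(X;Y) (in bits) equals ∑_{j=1}^{Q} ∑_{i=0}^{S-1} p_j · C(S-1,i) p_j^i (1-p_j)^{S-1-i} · log₂((i+1)/(S p_j)), where terms with p_j = 0 are taken to be 0. -/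
open Finset

/-- Probability of the output vector `y` of the B-channel with `S` users using
the common input distribution `p`: `p(y) = binom(S; y₁,…,y_Q) ∏ⱼ pⱼ^{yⱼ}`. -/
noncomputable def outProb {Q : ℕ} (p : Fin Q → ℝ) (y : Fin Q → ℕ) : ℝ :=
  (Nat.multinomial Finset.univ y : ℝ) * ∏ i, p i ^ y i

/-- Probability of the output `y` given that user 1 chose frequency `j`. -/
noncomputable def condProb {Q : ℕ} (p : Fin Q → ℝ) (j : Fin Q) (y : Fin Q → ℕ) : ℝ :=
  if 0 < y j then
    (Nat.multinomial Finset.univ (Function.update y j (y j - 1)) : ℝ) *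
      ∏ i, p i ^ (Function.update y j (y j - 1)) i
  else 0

lemma sum_update_pred {Q : ℕ} (y : Fin Q → ℕ) (j : Fin Q) (hy : 0 < y j) :
    ∑ i, Function.update y j (y j - 1) i + 1 = ∑ i, y i := by
  rw [Finset.sum_update_of_mem (mem_univ j),
    Finset.sum_eq_sum_sdiff_singleton_add (mem_univ j) y]
  omega

lemma sum_update_succ {Q : ℕ} (z : Fin Q → ℕ) (j : Fin Q) :
    ∑ i, Function.update z j (z j + 1) i = ∑ i, z i + 1 := by
  rw [Finset.sum_update_of_mem (mem_univ j),
    Finset.sum_eq_sum_sdiff_singleton_add (mem_univ j) z]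
  omega

lemma mult_key {Q : ℕ} (S : ℕ) (y : Fin Q → ℕ) (j : Fin Q) (hsum : ∑ i, y i = S)
    (hy : 0 < y j) :
    S * Nat.multinomial univ (Function.update y j (y j - 1)) = y j * Nat.multinomial univ y := by
  set y' := Function.update y j (y j - 1) with hy'
  have h := sum_update_pred y j hy
  rw [← hy', hsum] at h
  have hsum' : ∑ i, y' i = S - 1 := by omega
  have h1 := Nat.multinomial_spec (univ : Finset (Fin Q)) y
  have h2 := Nat.multinomial_spec (univ : Finset (Fin Q)) y'
  rw [hsum] at h1
  rw [hsum'] at h2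
  have hprod : ∏ i, Nat.factorial (y i) = y j * ∏ i, Nat.factorial (y' i) := by
    rw [← Finset.mul_prod_erase univ (fun i => Nat.factorial (y i)) (mem_univ j),
      ← Finset.mul_prod_erase univ (fun i => Nat.factorial (y' i)) (mem_univ j), ← mul_assoc]
    have he : ∏ i ∈ univ.erase j, Nat.factorial (y i)
        = ∏ i ∈ univ.erase j, Nat.factorial (y' i) :=
      Finset.prod_congr rfl fun i hi => by
        rw [hy', Function.update_of_ne (Finset.ne_of_mem_erase hi)]
    rw [he]
    congr 1
    rw [hy', Function.update_self, ← Nat.succ_pred_eq_of_pos hy, Nat.factorial_succ]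
    simp
  have hfact : Nat.factorial S = S * Nat.factorial (S - 1) := by
    have hS : S = (S - 1) + 1 := by omega
    rw [hS, Nat.factorial_succ]; simp
  have hP : 0 < ∏ i, Nat.factorial (y' i) := Finset.prod_pos fun i _ => Nat.factorial_pos _
  have : (∏ i, Nat.factorial (y' i)) * (S * Nat.multinomial univ y') =
      (∏ i, Nat.factorial (y' i)) * (y j * Nat.multinomial univ y) := by
    rw [mul_left_comm, h2, ← hfact, ← h1, hprod]; ring
  exact Nat.eq_of_mul_eq_mul_left hP this

lemma marginal_sum {Q : ℕ} (p : Fin Q → ℝ) (hsum : ∑ i, p i = 1) (j : Fin Q) (n : ℕ)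
    (g : ℕ → ℝ) :
    ∑ z ∈ Finset.Nat.antidiagonalTuple Q n,
      (Nat.multinomial univ z : ℝ) * (∏ i, p i ^ z i) * g (z j)
    = ∑ i ∈ Finset.range (n + 1), (n.choose i : ℝ) * p j ^ i * (1 - p j) ^ (n - i) * g i := by
  have hj : j ∉ univ.erase j := notMem_erase j univ
  have huniv : (univ : Finset (Fin Q)) = cons j (univ.erase j) hj := by
    rw [Finset.cons_eq_insert, Finset.insert_erase (mem_univ j)]
  have hq : ∑ i ∈ univ.erase j, p i = 1 - p j := by
    have h2 := Finset.add_sum_erase univ p (mem_univ j)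
    linarith
  rw [← Finset.piAntidiag_univ_fin_eq_antidiagonalTuple,
    show (Finset.piAntidiag (univ : Finset (Fin Q)) n)
      = Finset.piAntidiag (cons j (univ.erase j) hj) n by rw [← huniv],
    Finset.piAntidiag_cons hj, Finset.sum_disjiUnion,
    Finset.Nat.sum_antidiagonal_eq_sum_range_succ_mk]
  refine Finset.sum_congr rfl fun a ha => ?_
  rw [Finset.mem_range] at ha
  rw [Finset.sum_map]
  have hinner : ∀ z ∈ Finset.piAntidiag (univ.erase j) (n - a),
      (Nat.multinomial univ ((addRightEmbedding fun t => if t = j then a else 0) z) : ℝ) *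
        (∏ i, p i ^ ((addRightEmbedding fun t => if t = j then a else 0) z) i) *
        g (((addRightEmbedding fun t => if t = j then a else 0) z) j)
      = ((n.choose a : ℝ) * p j ^ a * g a) *
          ((Nat.multinomial (univ.erase j) z : ℝ) * ∏ i ∈ univ.erase j, p i ^ z i) := by
    intro z hz
    rw [Finset.mem_piAntidiag] at hz
    obtain ⟨hzsum, hzsupp⟩ := hz
    have hzj : z j = 0 := by
      by_contra h; exact hj (hzsupp j h)
    have hf : ∀ i, ((addRightEmbedding fun t => if t = j then a else 0) z) i
        = z i + if i = j then a else 0 := fun i => rfl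
    have hfj : ((addRightEmbedding fun t => if t = j then a else 0) z) j = a := by
      rw [hf, hzj, if_pos rfl, zero_add]
    have hfi : ∀ i, i ≠ j → ((addRightEmbedding fun t => if t = j then a else 0) z) i = z i := by
      intro i hi; rw [hf, if_neg hi, add_zero]
    have hmult : Nat.multinomial univ ((addRightEmbedding fun t => if t = j then a else 0) z)
        = n.choose a * Nat.multinomial (univ.erase j) z := by
      conv_lhs => rw [huniv]
      rw [Nat.multinomial_cons]
      congr 1
      · rw [hfj]
        congr 1
        rw [Finset.sum_congr rfl fun i hi => hfi i (Finset.ne_of_mem_erase hi), hzsum]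
        omega
      · exact Nat.multinomial_congr fun i hi => hfi i (Finset.ne_of_mem_erase hi)
    have hprodeq : ∏ i, p i ^ ((addRightEmbedding fun t => if t = j then a else 0) z) i
        = p j ^ a * ∏ i ∈ univ.erase j, p i ^ z i := by
      conv_lhs => rw [huniv]
      rw [Finset.prod_cons, hfj]
      congr 1
      exact Finset.prod_congr rfl fun i hi => by rw [hfi i (Finset.ne_of_mem_erase hi)]
    rw [hmult, hprodeq, hfj]
    push_cast
    ring
  rw [Finset.sum_congr rfl hinner, ← Finset.mul_sum,
    ← Finset.sum_pow_eq_sum_piAntidiag (univ.erase j) p (n - a), hq]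
  ring

lemma inner_eq {Q S : ℕ} (hS : 1 ≤ S) (p : Fin Q → ℝ) (hp : ∀ i, 0 ≤ p i)
    (j : Fin Q) (hpj : 0 < p j) :
    ∑ y ∈ Finset.Nat.antidiagonalTuple Q S,
        p j * condProb p j y * Real.logb 2 (condProb p j y / outProb p y)
    = ∑ z ∈ Finset.Nat.antidiagonalTuple Q (S - 1),
        (Nat.multinomial univ z : ℝ) * (∏ i, p i ^ z i) *
          (p j * Real.logb 2 ((z j + 1 : ℝ) / (S * p j))) := by
  rw [← Finset.sum_filter_of_ne (p := fun y => 0 < y j)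
    (fun y _ h => by by_contra hc; simp [condProb, hc] at h)]
  refine Finset.sum_nbij' (fun y => Function.update y j (y j - 1))
    (fun z => Function.update z j (z j + 1)) ?_ ?_ ?_ ?_ ?_
  · intro y hy
    rw [Finset.mem_filter, Finset.Nat.mem_antidiagonalTuple] at hy
    show Function.update y j (y j - 1) ∈ _
    rw [Finset.Nat.mem_antidiagonalTuple]
    have := sum_update_pred y j hy.2
    omega
  · intro z hz
    rw [Finset.Nat.mem_antidiagonalTuple] at hz
    show Function.update z j (z j + 1) ∈ _
    rw [Finset.mem_filter, Finset.Nat.mem_antidiagonalTuple]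
    constructor
    · rw [sum_update_succ]; omega
    · simp
  · intro y hy
    rw [Finset.mem_filter] at hy
    funext i
    rcases eq_or_ne i j with rfl | hij
    · simp [Function.update_self]
      omega
    · simp [Function.update_of_ne hij]
  · intro z hz
    funext i
    rcases eq_or_ne i j with rfl | hij
    · simp [Function.update_self]
    · simp [Function.update_of_ne hij]
  · intro y hy
    rw [Finset.mem_filter, Finset.Nat.mem_antidiagonalTuple] at hy
    obtain ⟨hysum, hyj⟩ := hy
    set y' := Function.update y j (y j - 1) with hy'def
    have hcond : condProb p j y = (Nat.multinomial univ y' : ℝ) * ∏ i, p i ^ y' i := by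
      rw [condProb, if_pos hyj]
    have hupj : y' j = y j - 1 := Function.update_self _ _ _
    have hyj1 : (y' j : ℝ) + 1 = (y j : ℝ) := by
      rw [hupj]; push_cast [Nat.cast_sub hyj]; ring
    rcases eq_or_ne (∏ i, p i ^ y' i) 0 with hP | hP
    · rw [hcond, hP]; ring
    · have hprody : ∏ i, p i ^ y i = p j * ∏ i, p i ^ y' i := by
        rw [← Finset.mul_prod_erase univ (fun i => p i ^ y i) (mem_univ j),
          ← Finset.mul_prod_erase univ (fun i => p i ^ y' i) (mem_univ j)]
        have he : ∏ i ∈ univ.erase j, p i ^ y i = ∏ i ∈ univ.erase j, p i ^ y' i :=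
          Finset.prod_congr rfl fun i hi => by
            rw [hy'def, Function.update_of_ne (Finset.ne_of_mem_erase hi)]
        rw [he, ← mul_assoc]
        congr 1
        rw [hupj]
        have hyy : y j = y j - 1 + 1 := by omega
        conv_lhs => rw [hyy]
        rw [pow_succ']
      have hMy : (0:ℝ) < (Nat.multinomial univ y : ℝ) := by
        exact_mod_cast Nat.multinomial_pos _ _
      have hSpos : (0:ℝ) < (S:ℝ) := by exact_mod_cast hS
      have hkey := mult_key S y j hysum hyj
      have hkeyR : (S:ℝ) * (Nat.multinomial univ y' : ℝ)
          = (y j : ℝ) * (Nat.multinomial univ y : ℝ) := by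
        exact_mod_cast hkey
      have hratio : condProb p j y / outProb p y = (y j : ℝ) / (S * p j) := by
        rw [hcond, outProb, hprody]
        have hPpos : 0 < ∏ i, p i ^ y' i :=
          (Finset.prod_nonneg fun i _ => pow_nonneg (hp i) _).lt_of_ne' hP
        rw [div_eq_div_iff (by positivity) (by positivity)]
        linear_combination (∏ i, p i ^ y' i) * p j * hkeyR
      rw [hratio, hcond, hyj1]
      ring

/-- The mutual information `I(X;Y)` between the input of user 1 and the output of
the B-channel with `S ≥ 2` users equals
`∑_j ∑_{i=0}^{S-1} pⱼ C(S-1,i) pⱼ^i (1-pⱼ)^{S-1-i} log₂((i+1)/(S pⱼ))`. -/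
theorem mutualInformation_B_channel (Q S : ℕ) (hS : 2 ≤ S)
    (p : Fin Q → ℝ) (hp : ∀ i, 0 ≤ p i) (hsum : ∑ i, p i = 1) :
    ∑ j, ∑ y ∈ Finset.Nat.antidiagonalTuple Q S,
        p j * condProb p j y * Real.logb 2 (condProb p j y / outProb p y)
    = ∑ j, ∑ i ∈ Finset.range S,
        p j * ((S - 1).choose i : ℝ) * p j ^ i * (1 - p j) ^ (S - 1 - i) *
          Real.logb 2 ((i + 1 : ℝ) / (S * p j)) := by
  refine Finset.sum_congr rfl fun j _ => ?_
  by_cases hpj : p j = 0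
  · simp [hpj]
  · have hpj' : 0 < p j := (hp j).lt_of_ne' hpj
    have hS1 : 1 ≤ S := by omega
    rw [inner_eq hS1 p hp j hpj',
      marginal_sum p hsum j (S - 1) (fun i => p j * Real.logb 2 ((i + 1 : ℝ) / (S * p j))),
      Nat.sub_add_cancel hS1]
    exact Finset.sum_congr rfl fun i _ => by ring
end

section
/- For the B-channel with S users and Q frequencies where all users use the same input distribution, the sum capacity satisfies C_uc(Q,S) = S · max I(X;Y) ≤ (Q-1) log₂ e. -/
open Finset

/-- Single-user mutual information of the B-channel with `S` users and common
input distribution `p`. -/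
noncomputable def Iuc {Q : ℕ} (S : ℕ) (p : Fin Q → ℝ) : ℝ :=
  ∑ j, ∑ i ∈ Finset.range S,
    p j * ((S - 1).choose i : ℝ) * p j ^ i * (1 - p j) ^ (S - 1 - i) *
      Real.logb 2 ((i + 1 : ℝ) / (S * p j))

private lemma binom_one (n : ℕ) (p : ℝ) :
    ∑ i ∈ Finset.range (n + 1), (n.choose i : ℝ) * p ^ i * (1 - p) ^ (n - i) = 1 := by
  calc ∑ i ∈ Finset.range (n + 1), (n.choose i : ℝ) * p ^ i * (1 - p) ^ (n - i)
      = ∑ i ∈ Finset.range (n + 1), p ^ i * (1 - p) ^ (n - i) * (n.choose i : ℝ) :=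
        Finset.sum_congr rfl fun i _ => by ring
    _ = (p + (1 - p)) ^ n := (add_pow p (1 - p) n).symm
    _ = 1 := by norm_num

private lemma mean0 (m : ℕ) (p : ℝ) :
    ∑ i ∈ Finset.range (m + 2), (i : ℝ) * ((m + 1).choose i : ℝ) * p ^ i * (1 - p) ^ (m + 1 - i)
      = ((m : ℝ) + 1) * p := by
  rw [Finset.sum_range_succ']
  simp only [Nat.cast_zero, zero_mul, pow_zero, add_zero]
  push_cast
  have step : ∀ k ∈ Finset.range (m + 1),
      ((k : ℝ) + 1) * ((m + 1).choose (k + 1) : ℝ) * p ^ (k + 1) * (1 - p) ^ (m - k)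
      = ((m : ℝ) + 1) * p * ((m.choose k : ℝ) * p ^ k * (1 - p) ^ (m - k)) := by
    intro k _
    have h : (k + 1) * (m + 1).choose (k + 1) = (m + 1) * m.choose k := by
      rw [mul_comm]
      exact (Nat.add_one_mul_choose_eq m k).symm
    have h' : ((k : ℝ) + 1) * ((m + 1).choose (k + 1) : ℝ) = ((m : ℝ) + 1) * (m.choose k : ℝ) := by
      exact_mod_cast congrArg (Nat.cast (R := ℝ)) h
    rw [pow_succ]
    linear_combination (p ^ k * p * (1 - p) ^ (m - k)) * h'
  calc ∑ k ∈ Finset.range (m + 1),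
        ((k : ℝ) + 1) * ((m + 1).choose (k + 1) : ℝ) * p ^ (k + 1) * (1 - p) ^ (m - k)
      = ∑ k ∈ Finset.range (m + 1),
        ((m : ℝ) + 1) * p * ((m.choose k : ℝ) * p ^ k * (1 - p) ^ (m - k)) :=
        Finset.sum_congr rfl step
    _ = ((m : ℝ) + 1) * p := by rw [← Finset.mul_sum, binom_one m p, mul_one]

private lemma mean1 (m : ℕ) (p : ℝ) :
    ∑ i ∈ Finset.range (m + 2),
        ((i : ℝ) + 1) * ((m + 1).choose i : ℝ) * p ^ i * (1 - p) ^ (m + 1 - i)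
      = ((m : ℝ) + 1) * p + 1 := by
  have : ∀ i ∈ Finset.range (m + 2),
      ((i : ℝ) + 1) * ((m + 1).choose i : ℝ) * p ^ i * (1 - p) ^ (m + 1 - i)
      = (i : ℝ) * ((m + 1).choose i : ℝ) * p ^ i * (1 - p) ^ (m + 1 - i)
        + ((m + 1).choose i : ℝ) * p ^ i * (1 - p) ^ (m + 1 - i) := fun i _ => by ring
  rw [Finset.sum_congr rfl this, Finset.sum_add_distrib, mean0, binom_one]

private lemma logb_le (x : ℝ) (hx : 0 < x) :
    Real.logb 2 x ≤ (x - 1) * Real.logb 2 (Real.exp 1) := by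
  have h2 : 0 < Real.log 2 := Real.log_pos (by norm_num)
  rw [Real.logb, Real.logb, Real.log_exp, mul_one_div]
  gcongr
  exact Real.log_le_sub_one_of_pos hx

private lemma logb_e_nonneg : 0 ≤ Real.logb 2 (Real.exp 1) :=
  Real.logb_nonneg (by norm_num) (by
    rw [show (1:ℝ) = Real.exp 0 by simp]
    exact Real.exp_le_exp.2 (by norm_num))

private lemma inner_le (m : ℕ) (p : ℝ) (hp0 : 0 ≤ p) (hp1 : p ≤ 1) :
    ∑ i ∈ Finset.range (m + 2),
        p * ((m + 1).choose i : ℝ) * p ^ i * (1 - p) ^ (m + 1 - i) *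
          Real.logb 2 (((i : ℝ) + 1) / (((m : ℝ) + 2) * p))
      ≤ (1 - p) / ((m : ℝ) + 2) * Real.logb 2 (Real.exp 1) := by
  have hm2 : (0:ℝ) < (m : ℝ) + 2 := by positivity
  rcases eq_or_lt_of_le hp0 with h0 | h0
  · rw [← h0]
    simp only [zero_mul]
    rw [Finset.sum_const_zero]
    have := logb_e_nonneg
    positivity
  · have hpne : p ≠ 0 := ne_of_gt h0
    have hq : 0 ≤ 1 - p := by linarith
    have key : ∀ i ∈ Finset.range (m + 2),
        p * ((m + 1).choose i : ℝ) * p ^ i * (1 - p) ^ (m + 1 - i) *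
          Real.logb 2 (((i : ℝ) + 1) / (((m : ℝ) + 2) * p))
        ≤ (((i : ℝ) + 1) * ((m + 1).choose i : ℝ) * p ^ i * (1 - p) ^ (m + 1 - i) / ((m : ℝ) + 2)
            - p * ((m + 1).choose i : ℝ) * p ^ i * (1 - p) ^ (m + 1 - i))
            * Real.logb 2 (Real.exp 1) := by
      intro i _
      set c : ℝ := p * ((m + 1).choose i : ℝ) * p ^ i * (1 - p) ^ (m + 1 - i) with hc
      have hcnn : 0 ≤ c := by positivity
      set x : ℝ := ((i : ℝ) + 1) / (((m : ℝ) + 2) * p) with hx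
      have hxpos : 0 < x := by positivity
      have h1 : c * Real.logb 2 x ≤ c * ((x - 1) * Real.logb 2 (Real.exp 1)) :=
        mul_le_mul_of_nonneg_left (logb_le x hxpos) hcnn
      calc c * Real.logb 2 x ≤ c * ((x - 1) * Real.logb 2 (Real.exp 1)) := h1
        _ = (((i : ℝ) + 1) * ((m + 1).choose i : ℝ) * p ^ i * (1 - p) ^ (m + 1 - i) / ((m : ℝ) + 2)
              - c) * Real.logb 2 (Real.exp 1) := by
            rw [hc, hx]
            field_simp
    calc ∑ i ∈ Finset.range (m + 2),
          p * ((m + 1).choose i : ℝ) * p ^ i * (1 - p) ^ (m + 1 - i) *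
            Real.logb 2 (((i : ℝ) + 1) / (((m : ℝ) + 2) * p))
        ≤ ∑ i ∈ Finset.range (m + 2),
          (((i : ℝ) + 1) * ((m + 1).choose i : ℝ) * p ^ i * (1 - p) ^ (m + 1 - i) / ((m : ℝ) + 2)
            - p * ((m + 1).choose i : ℝ) * p ^ i * (1 - p) ^ (m + 1 - i))
            * Real.logb 2 (Real.exp 1) := Finset.sum_le_sum key
      _ = ((∑ i ∈ Finset.range (m + 2),
              ((i : ℝ) + 1) * ((m + 1).choose i : ℝ) * p ^ i * (1 - p) ^ (m + 1 - i))
              / ((m : ℝ) + 2)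
            - p * ∑ i ∈ Finset.range (m + 2),
              ((m + 1).choose i : ℝ) * p ^ i * (1 - p) ^ (m + 1 - i))
            * Real.logb 2 (Real.exp 1) := by
          rw [Finset.sum_div, Finset.mul_sum, ← Finset.sum_sub_distrib, Finset.sum_mul]
          refine Finset.sum_congr rfl fun i _ => by ring
      _ = (1 - p) / ((m : ℝ) + 2) * Real.logb 2 (Real.exp 1) := by
          rw [mean1, binom_one, mul_one]
          congr 1
          field_simp
          ring

/-- For the uncoordinated B-channel, the sum rate `S · I(X;Y)` is bounded by
`(Q-1) log₂ e` for every common input distribution; hence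
`C_uc(Q,S) = S · max I(X;Y) ≤ (Q-1) log₂ e`. -/
theorem sum_capacity_uncoordinated_upper (Q S : ℕ) (hS : 2 ≤ S)
    (p : Fin Q → ℝ) (hp : ∀ i, 0 ≤ p i) (hsum : ∑ i, p i = 1) :
    (S : ℝ) * Iuc S p ≤ ((Q : ℝ) - 1) * Real.logb 2 (Real.exp 1) := by
  obtain ⟨m, rfl⟩ : ∃ m, S = m + 2 := ⟨S - 2, by omega⟩
  have hp1 : ∀ j, p j ≤ 1 := by
    intro j
    calc p j ≤ ∑ i, p i := Finset.single_le_sum (fun i _ => hp i) (Finset.mem_univ j)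
      _ = 1 := hsum
  have hIuc : Iuc (m + 2) p ≤ ∑ j, (1 - p j) / ((m : ℝ) + 2) * Real.logb 2 (Real.exp 1) := by
    unfold Iuc
    refine Finset.sum_le_sum fun j _ => ?_
    have h := inner_le m (p j) (hp j) (hp1 j)
    refine le_trans (le_of_eq (Finset.sum_congr rfl fun i _ => ?_)) h
    norm_num
  calc ((m + 2 : ℕ) : ℝ) * Iuc (m + 2) p
      ≤ ((m + 2 : ℕ) : ℝ) * ∑ j, (1 - p j) / ((m : ℝ) + 2) * Real.logb 2 (Real.exp 1) := by
        apply mul_le_mul_of_nonneg_left hIuc (by positivity)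
    _ = ((Q : ℝ) - 1) * Real.logb 2 (Real.exp 1) := by
        push_cast
        rw [Finset.mul_sum]
        have hterm : ∀ j : Fin Q,
            ((m : ℝ) + 2) * ((1 - p j) / ((m : ℝ) + 2) * Real.logb 2 (Real.exp 1))
            = (1 - p j) * Real.logb 2 (Real.exp 1) := fun j => by
          field_simp
        rw [Finset.sum_congr rfl fun j _ => hterm j, ← Finset.sum_mul]
        congr 1
        rw [Finset.sum_sub_distrib, hsum, Finset.sum_const, Finset.card_univ]
        simp
end

section
/- The asymptotic relative capacity of the coordinated B-channel satisfies the upper bound c_c(γ) ≤ (γ+1) log₂(γ+1) − γ log₂ γ for all γ > 0; equivalently, for all Q, S ≥ 1, log₂ C(S+Q-1, S) ≤ Q[(γ+1)log₂(γ+1) − γ log₂ γ] when S = γQ, and (1/Q) log₂ C(γQ + Q − 1, γQ) → (γ+1)log₂(γ+1) − γ log₂ γ as Q → ∞. -/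
open Filter Real Asymptotics Topology
open scoped Nat

/-! Keeping only the term `i = a` of the binomial expansion of `(a + b) ^ (a + b)` gives
`C(a+b, a) aᵃ bᵇ ≤ (a+b)^(a+b)`, so `log C(a+b, a)` is at most the entropy
`(a+b) log(a+b) − a log a − b log b`. The entropy is homogeneous of degree one, so for `S = γQ`
it equals `Q · [(γ+1) log(γ+1) − γ log γ]`. Conversely, Stirling's formula
`log n! = n log n − n + o(n)` shows that `log C(a+b, a)` is the same entropy up to `o(a + b)`,
which gives the limit. -/

theorem choose_mul_pow_mul_pow_le_add_pow {R : Type*} [CommSemiring R] [PartialOrder R]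
    [IsOrderedRing R] {x y : R} (hx : 0 ≤ x) (hy : 0 ≤ y) (a b : ℕ) :
    ((a + b).choose a : R) * x ^ a * y ^ b ≤ (x + y) ^ (a + b) := by
  calc ((a + b).choose a : R) * x ^ a * y ^ b
      = x ^ a * y ^ (a + b - a) * ((a + b).choose a : R) := by
        rw [Nat.add_sub_cancel_left]; ring
    _ ≤ ∑ i ∈ Finset.range (a + b + 1), x ^ i * y ^ (a + b - i) * ((a + b).choose i : R) :=
        Finset.single_le_sum (f := fun i => x ^ i * y ^ (a + b - i) * ((a + b).choose i : R))
          (fun i _ => by positivity) (Finset.mem_range.2 (Nat.lt_succ_of_le (Nat.le_add_right a b)))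
    _ = (x + y) ^ (a + b) := (add_pow x y (a + b)).symm

noncomputable def pairEntropy (x y : ℝ) : ℝ := negMulLog x + negMulLog y - negMulLog (x + y)

theorem pairEntropy_mul (c x y : ℝ) : pairEntropy (c * x) (c * y) = c * pairEntropy x y := by
  simp only [pairEntropy, ← mul_add, negMulLog_mul]
  ring

theorem log_choose_le_pairEntropy (a b : ℕ) : log ((a + b).choose a) ≤ pairEntropy a b := by
  have hself : ∀ n : ℕ, (0 : ℝ) < (n : ℝ) ^ n := fun n => by exact_mod_cast n.pow_self_pos
  have hchoose : (0 : ℝ) < (a + b).choose a := by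
    exact_mod_cast Nat.choose_pos (Nat.le_add_right a b)
  have h := log_le_log (by have := hself a; have := hself b; positivity)
    (choose_mul_pow_mul_pow_le_add_pow (Nat.cast_nonneg (α := ℝ) a) (Nat.cast_nonneg b) a b)
  rw [log_mul (by have := hself a; positivity) (hself b).ne', log_mul hchoose.ne' (hself a).ne',
    log_pow, log_pow, log_pow] at h
  simp only [pairEntropy, negMulLog]
  push_cast at h
  linarith

noncomputable def stirlingRemainder (n : ℕ) : ℝ := log n ! - (n * log n - n)

theorem log_choose_eq_pairEntropy_add (a b : ℕ) :
    log ((a + b).choose a) = pairEntropy a b + stirlingRemainder (a + b)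
      - stirlingRemainder a - stirlingRemainder b := by
  have hfact : ((a + b).choose a : ℝ) * a ! * b ! = (a + b)! := by
    have h := Nat.choose_mul_factorial_mul_factorial (Nat.le_add_right a b)
    rw [Nat.add_sub_cancel_left] at h
    exact_mod_cast h
  have hchoose : ((a + b).choose a : ℝ) ≠ 0 := by
    exact_mod_cast (Nat.choose_pos (Nat.le_add_right a b)).ne'
  have hlog := congrArg log hfact
  rw [log_mul (by positivity) (by positivity), log_mul hchoose (by positivity)] at hlog
  simp only [pairEntropy, stirlingRemainder, negMulLog]
  push_cast
  linarith

theorem stirlingRemainder_eq {n : ℕ} (hn : n ≠ 0) :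
    stirlingRemainder n = log (Stirling.stirlingSeq n) + log (2 * n) / 2 := by
  have hn0 : (0 : ℝ) < n := by positivity
  rw [stirlingRemainder, Stirling.stirlingSeq, log_div (by positivity) (by positivity),
    log_mul (by positivity) (by positivity), log_sqrt (by positivity), log_pow,
    log_div hn0.ne' (exp_pos 1).ne', log_exp]
  ring

theorem stirlingRemainder_isLittleO : stirlingRemainder =o[atTop] (fun n : ℕ => (n : ℝ)) := by
  have hone : (fun _ : ℕ => (1 : ℝ)) =o[atTop] (fun n : ℕ => (n : ℝ)) :=
    (isLittleO_one_left_iff ℝ).2 (by simpa using tendsto_natCast_atTop_atTop)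
  have hseq : (fun n => log (Stirling.stirlingSeq n)) =o[atTop] (fun n : ℕ => (n : ℝ)) :=
    (((continuousAt_log (by positivity)).tendsto.comp
      Stirling.tendsto_stirlingSeq_sqrt_pi).isBigO_one ℝ).trans_isLittleO hone
  have hlog : (fun n : ℕ => log n) =o[atTop] (fun n : ℕ => (n : ℝ)) :=
    isLittleO_log_id_atTop.comp_tendsto tendsto_natCast_atTop_atTop
  refine (hseq.add (((hone.const_mul_left (log 2)).add hlog).const_mul_left (1 / 2))).congr' ?_
    EventuallyEq.rfl
  filter_upwards [eventually_ne_atTop 0] with n hn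
  rw [stirlingRemainder_eq hn, log_mul two_ne_zero (by positivity)]
  ring

theorem tendsto_stirlingRemainder_comp_div {a : ℕ → ℕ} {x : ℝ} (ha : Tendsto a atTop atTop)
    (hax : Tendsto (fun Q : ℕ => (a Q : ℝ) / Q) atTop (𝓝 x)) :
    Tendsto (fun Q : ℕ => stirlingRemainder (a Q) / Q) atTop (𝓝 0) := by
  have hbig : (fun Q => (a Q : ℝ)) =O[atTop] (fun Q : ℕ => (Q : ℝ)) :=
    isBigO_of_div_tendsto_nhds (by
      filter_upwards [eventually_ne_atTop 0] with Q hQ hQ0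
      exact absurd hQ0 (by exact_mod_cast hQ)) x hax
  exact ((stirlingRemainder_isLittleO.comp_tendsto ha).trans_isBigO hbig).tendsto_div_nhds_zero

theorem tendsto_log_choose_div {a b : ℕ → ℕ} {x y : ℝ} (ha : Tendsto a atTop atTop)
    (hb : Tendsto b atTop atTop) (hax : Tendsto (fun Q : ℕ => (a Q : ℝ) / Q) atTop (𝓝 x))
    (hby : Tendsto (fun Q : ℕ => (b Q : ℝ) / Q) atTop (𝓝 y)) :
    Tendsto (fun Q : ℕ => log ((a Q + b Q).choose (a Q)) / Q) atTop (𝓝 (pairEntropy x y)) := by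
  have habxy : Tendsto (fun Q : ℕ => ((a Q + b Q : ℕ) : ℝ) / Q) atTop (𝓝 (x + y)) := by
    simpa only [Nat.cast_add, add_div] using hax.add hby
  have hent : Tendsto (fun Q : ℕ => pairEntropy (a Q / Q) (b Q / Q)) atTop
      (𝓝 (pairEntropy x y)) :=
    (((continuous_negMulLog.tendsto x).comp hax).add
      ((continuous_negMulLog.tendsto y).comp hby)).sub
        ((continuous_negMulLog.tendsto (x + y)).comp (hax.add hby))
  have hrem := ((tendsto_stirlingRemainder_comp_div
    (tendsto_atTop_mono (fun Q => Nat.le_add_right _ _) ha) habxy).sub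
    (tendsto_stirlingRemainder_comp_div ha hax)).sub (tendsto_stirlingRemainder_comp_div hb hby)
  rw [sub_zero, sub_zero] at hrem
  have hsum := hent.add hrem
  rw [add_zero] at hsum
  refine hsum.congr' ?_
  filter_upwards [eventually_ne_atTop 0] with Q hQ
  have hQ0 : (Q : ℝ) ≠ 0 := by exact_mod_cast hQ
  have hscale : pairEntropy (a Q) (b Q) = Q * pairEntropy (a Q / Q) (b Q / Q) := by
    rw [← pairEntropy_mul, mul_div_cancel₀ _ hQ0, mul_div_cancel₀ _ hQ0]
  rw [log_choose_eq_pairEntropy_add, hscale]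
  field_simp
  ring

/-- Upper bound on the relative capacity of the coordinated B-channel:
for `S = γQ`, `log₂ C(S+Q-1, S) ≤ Q·[(γ+1)log₂(γ+1) − γ log₂ γ]`, and
`(1/Q) log₂ C(γQ+Q−1, γQ) → (γ+1)log₂(γ+1) − γ log₂ γ` as `Q → ∞`. -/
theorem coordinated_capacity_upper (γ : ℝ) (hγ : 0 < γ) :
    (∀ Q S : ℕ, 1 ≤ Q → 1 ≤ S → (S : ℝ) = γ * Q →
      Real.logb 2 ((S + Q - 1).choose S : ℝ)
        ≤ (Q : ℝ) * ((γ + 1) * Real.logb 2 (γ + 1) - γ * Real.logb 2 γ))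
    ∧ Tendsto (fun Q : ℕ =>
        (1 / (Q : ℝ)) * Real.logb 2 (((⌊γ * Q⌋₊ + Q - 1).choose ⌊γ * Q⌋₊ : ℝ)))
        atTop (nhds ((γ + 1) * Real.logb 2 (γ + 1) - γ * Real.logb 2 γ)) := by
  have hentropy : (γ + 1) * logb 2 (γ + 1) - γ * logb 2 γ = pairEntropy γ 1 / log 2 := by
    simp only [pairEntropy, negMulLog, logb, log_one]
    ring_nf
  rw [hentropy]
  constructor
  · intro Q S hQ _ hSγ
    have hpos : (0 : ℝ) < (S + Q - 1).choose S := by exact_mod_cast Nat.choose_pos (by omega)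
    have hscale : pairEntropy S Q = Q * pairEntropy γ 1 := by
      rw [hSγ, ← pairEntropy_mul, mul_comm, mul_one]
    calc logb 2 ((S + Q - 1).choose S) ≤ logb 2 ((S + Q).choose S) :=
          logb_le_logb_of_le one_lt_two hpos (by exact_mod_cast Nat.choose_le_choose S (by omega))
      _ ≤ pairEntropy S Q / log 2 :=
          div_le_div_of_nonneg_right (log_choose_le_pairEntropy S Q) (log_nonneg one_le_two)
      _ = Q * (pairEntropy γ 1 / log 2) := by rw [hscale, mul_div_assoc]
  · have hfloor : Tendsto (fun Q : ℕ => (⌊γ * Q⌋₊ : ℝ) / Q) atTop (𝓝 γ) :=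
      (tendsto_nat_floor_mul_div_atTop hγ.le).comp tendsto_natCast_atTop_atTop
    have hpred : Tendsto (fun Q : ℕ => ((Q - 1 : ℕ) : ℝ) / Q) atTop (𝓝 1) := by
      refine ((tendsto_natCast_div_add_atTop (1 : ℝ)).comp (tendsto_sub_atTop_nat 1)).congr' ?_
      filter_upwards [eventually_ge_atTop 1] with Q hQ
      simp [Nat.cast_sub hQ]
    have hfloor_top : Tendsto (fun Q : ℕ => ⌊γ * Q⌋₊) atTop atTop :=
      tendsto_nat_floor_atTop.comp (tendsto_natCast_atTop_atTop.const_mul_atTop hγ)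
    refine ((tendsto_log_choose_div hfloor_top (tendsto_sub_atTop_nat 1) hfloor hpred).div_const
      (log 2)).congr' ?_
    filter_upwards [eventually_ge_atTop 1] with Q hQ
    rw [← Nat.add_sub_assoc hQ, logb]
    ring
end

section
/- For every γ with 0 < γ < ∞, the series ∑_{i=0}^{∞} (γ^i/i!) e^{−γ} log₂(i!) converges, and the lower bound c_c^{(L)}(γ) = ∑_{i=0}^{∞} (γ^i/i!) e^{−γ} log₂(i!) − γ log₂(γ/e) is a well-defined nonnegative real number. -/
/-!
Writing `p_n = γⁿ/n! · e^{-γ}` for the Poisson weights, the growth bound `log₂ n! ≤ 4ⁿ` makes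
`∑ p_n log₂ n!` converge by comparison with the exponential series of `4|γ|`. For the lower bound,
the single term `γⁿ/n!` of the series of `e^γ` gives `n! ≥ γⁿ e^{-γ}`, i.e.
`log₂ n! ≥ (n log γ - γ) / log 2`, an affine function of `n`. Averaging against `p_n`, which has
total mass `1` and mean `γ`, yields `∑ p_n log₂ n! ≥ (γ log γ - γ) / log 2 = γ log₂ (γ/e)`.
-/

open Real
open scoped Nat

noncomputable def poissonWeight (γ : ℝ) (n : ℕ) : ℝ := γ ^ n / n ! * exp (-γ)

lemma poissonWeight_nonneg {γ : ℝ} (hγ : 0 ≤ γ) (n : ℕ) : 0 ≤ poissonWeight γ n := by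
  unfold poissonWeight; positivity

lemma hasSum_poissonWeight (γ : ℝ) : HasSum (poissonWeight γ) 1 := by
  have := (NormedSpace.expSeries_div_hasSum_exp γ).mul_right (exp (-γ))
  rwa [← exp_eq_exp_ℝ, ← exp_add, add_neg_cancel, exp_zero] at this

lemma hasSum_poissonWeight_mul_natCast (γ : ℝ) :
    HasSum (fun n : ℕ => poissonWeight γ n * n) γ := by
  rw [← hasSum_nat_add_iff' 1]
  have hshift : ∀ n : ℕ, poissonWeight γ (n + 1) * (n + 1 : ℝ) = γ * poissonWeight γ n := by
    intro n
    simp only [poissonWeight, Nat.factorial_succ, pow_succ]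
    push_cast
    field_simp
  simpa [hshift] using (hasSum_poissonWeight γ).mul_left γ

lemma hasSum_poissonWeight_mul_affine (γ a b : ℝ) :
    HasSum (fun n : ℕ => poissonWeight γ n * (a * n + b)) (a * γ + b) := by
  have := ((hasSum_poissonWeight_mul_natCast γ).mul_left a).add
    ((hasSum_poissonWeight γ).mul_left b)
  rw [mul_one] at this
  exact this.congr_fun fun n => by ring

lemma logb_two_factorial_le_four_pow (n : ℕ) : logb 2 (n ! : ℝ) ≤ 4 ^ n := by
  have hn : n ≤ 2 ^ n := Nat.lt_two_pow_self.le
  have hfac : (n ! : ℝ) ≤ 2 ^ (n * n) := by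
    rw [pow_mul]
    exact_mod_cast (Nat.factorial_le_pow n).trans (Nat.pow_le_pow_left hn n)
  calc logb 2 (n ! : ℝ) ≤ logb 2 ((2 : ℝ) ^ (n * n)) :=
        logb_le_logb_of_le one_lt_two (by positivity) hfac
    _ = ((n * n : ℕ) : ℝ) := by rw [logb_pow, logb_self_eq_one one_lt_two, mul_one]
    _ ≤ 4 ^ n := by
        rw [show (4 : ℝ) = 2 * 2 by norm_num, mul_pow]
        exact_mod_cast Nat.mul_le_mul hn hn

lemma summable_poissonWeight_mul_logb_factorial (γ : ℝ) :
    Summable (fun n : ℕ => poissonWeight γ n * logb 2 (n ! : ℝ)) := by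
  refine ((summable_pow_div_factorial (4 * |γ|)).mul_right (exp (-γ))).of_norm_bounded
    fun n => ?_
  have hlog : 0 ≤ logb 2 (n ! : ℝ) := logb_nonneg one_lt_two (Nat.one_le_cast.2 n.factorial_pos)
  calc ‖poissonWeight γ n * logb 2 (n ! : ℝ)‖
      = |γ| ^ n / n ! * exp (-γ) * logb 2 (n ! : ℝ) := by
        simp [poissonWeight, abs_of_nonneg hlog]
    _ ≤ |γ| ^ n / n ! * exp (-γ) * 4 ^ n := by
        gcongr; exact logb_two_factorial_le_four_pow n
    _ = (4 * |γ|) ^ n / n ! * exp (-γ) := by ring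

lemma mul_log_sub_le_log_factorial {γ : ℝ} (hγ : 0 < γ) (n : ℕ) :
    n * log γ - γ ≤ log (n ! : ℝ) := by
  have hpow : γ ^ n ≤ n ! * exp γ := by
    have := pow_div_factorial_le_exp (x := γ) hγ.le n
    rwa [div_le_iff₀ (by positivity), mul_comm] at this
  have := log_le_log (by positivity) hpow
  rwa [log_pow, log_mul (by positivity) (exp_pos γ).ne', log_exp, ← sub_le_iff_le_add] at this

/-- For every `0 < γ < ∞` the Poisson expectation `E[log₂(P!)]`, `P ~ Poisson(γ)`,
converges, and `c_c^{(L)}(γ) = ∑_{i} (γ^i/i!) e^{−γ} log₂(i!) − γ log₂(γ/e)` is a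
well-defined nonnegative real number. -/
theorem coordinated_lower_bound_welldefined (γ : ℝ) (hγ : 0 < γ) :
    Summable (fun i : ℕ =>
        γ ^ i / (Nat.factorial i) * Real.exp (-γ) * Real.logb 2 (Nat.factorial i))
    ∧ 0 ≤ (∑' i : ℕ,
          γ ^ i / (Nat.factorial i) * Real.exp (-γ) * Real.logb 2 (Nat.factorial i))
        - γ * Real.logb 2 (γ / Real.exp 1) := by
  have hsum := summable_poissonWeight_mul_logb_factorial γ
  refine ⟨hsum, sub_nonneg.2 ?_⟩
  have hvalue : log γ / log 2 * γ + -γ / log 2 = γ * logb 2 (γ / exp 1) := by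
    rw [logb, log_div hγ.ne' (exp_pos 1).ne', log_exp]; ring
  rw [← hvalue]
  refine hasSum_le (fun n => ?_) (hasSum_poissonWeight_mul_affine γ _ _) hsum.hasSum
  gcongr poissonWeight γ n * ?_
  · exact poissonWeight_nonneg hγ.le n
  calc log γ / log 2 * n + -γ / log 2 = (n * log γ - γ) / log 2 := by ring
    _ ≤ logb 2 (n ! : ℝ) := by
        rw [logb]
        gcongr; exact mul_log_sub_le_log_factorial hγ n
end

section
/- Fix γ > 0 and set S = ⌊γQ⌋. Then as Q → ∞, ∑_{i=0}^{S} C(S,i)(1/Q)^i (1−1/Q)^{S−i} log₂(i!) → ∑_{i=0}^{∞} (γ^i/i!) e^{−γ} log₂(i!). That is, the expectation of log₂(B!) for B ~ Bin(S, 1/Q) converges to the expectation of log₂(P!) for P ~ Poisson(γ). -/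
/-!
The binomial weight `C(S, i) Q⁻ⁱ (1 - 1/Q)^(S - i)` tends to the Poisson weight `γⁱ e^(-γ) / i!`
(law of small numbers) and is bounded by `(S/Q)ⁱ / i! ≤ (γ + 1)ⁱ / i!`. As `log₂ i! ≤ i² ≤ 4ⁱ`,
the terms of the sum are dominated by the summable sequence `(4(γ + 1))ⁱ / i!`, and dominated
convergence for series (Tannery's theorem) gives the limit.
-/

open Finset Filter Topology Real Nat Asymptotics

noncomputable def binomialProb (n : ℕ) (p : ℝ) (k : ℕ) : ℝ :=
  (n.choose k : ℝ) * p ^ k * (1 - p) ^ (n - k)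

noncomputable def poissonProb (r : ℝ) (k : ℕ) : ℝ :=
  r ^ k / k ! * exp (-r)

lemma binomialProb_eq_zero_of_lt {n k : ℕ} (p : ℝ) (h : n < k) : binomialProb n p k = 0 := by
  simp [binomialProb, Nat.choose_eq_zero_of_lt h]

lemma binomialProb_nonneg {n : ℕ} {p : ℝ} (h₀ : 0 ≤ p) (h₁ : p ≤ 1) (k : ℕ) :
    0 ≤ binomialProb n p k := by
  unfold binomialProb
  have : 0 ≤ 1 - p := by linarith
  positivity

lemma binomialProb_le {n : ℕ} {p : ℝ} (h₀ : 0 ≤ p) (h₁ : p ≤ 1) (k : ℕ) :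
    binomialProb n p k ≤ (n * p) ^ k / k ! := by
  have hchoose : (n.choose k : ℝ) * p ^ k ≤ (n * p) ^ k / k ! := by
    rw [mul_pow, mul_div_right_comm]
    gcongr
    exact Nat.choose_le_pow_div k n
  calc binomialProb n p k ≤ (n.choose k : ℝ) * p ^ k * 1 := by
        unfold binomialProb
        gcongr
        exact pow_le_one₀ (by linarith) (by linarith)
    _ ≤ (n * p) ^ k / k ! := (mul_one _).trans_le hchoose

section PoissonLimit

variable {α : Type*} {l : Filter α} {n : α → ℕ} {p : α → ℝ} {r : ℝ}

lemma tendsto_zero_of_tendsto_natCast_mul (hn : Tendsto n l atTop)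
    (hr : Tendsto (fun a => n a * p a) l (𝓝 r)) : Tendsto p l (𝓝 0) := by
  have hinv : Tendsto (fun a => 1 / (n a : ℝ)) l (𝓝 0) :=
    tendsto_one_div_atTop_nhds_zero_nat.comp hn
  refine (mul_zero r ▸ hr.mul hinv).congr' ?_
  filter_upwards [hn.eventually_ge_atTop 1] with a ha
  have : (n a : ℝ) ≠ 0 := by positivity
  field_simp

/-- Squeeze `n * log (1 - p)` between `-n p / (1 - p)` and `-n p`. -/
lemma tendsto_one_sub_pow_exp (hn : Tendsto n l atTop)
    (hr : Tendsto (fun a => n a * p a) l (𝓝 r)) :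
    Tendsto (fun a => (1 - p a) ^ n a) l (𝓝 (exp (-r))) := by
  have hp := tendsto_zero_of_tendsto_natCast_mul hn hr
  have hp_lt : ∀ᶠ a in l, p a < 1 := hp.eventually (gt_mem_nhds one_pos)
  have hlower : Tendsto (fun a => -(n a * p a) / (1 - p a)) l (𝓝 (-r)) := by
    rw [show -r = -r / (1 - 0) by simp]
    exact hr.neg.div (tendsto_const_nhds.sub hp) (by norm_num)
  have hlog : Tendsto (fun a => n a * log (1 - p a)) l (𝓝 (-r)) := by
    refine tendsto_of_tendsto_of_tendsto_of_le_of_le' hlower hr.neg ?_ ?_ <;>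
      filter_upwards [hp_lt] with a ha <;> have h₀ : 0 < 1 - p a := by linarith
    · calc -(n a * p a) / (1 - p a) = n a * (1 - (1 - p a)⁻¹) := by field_simp; ring
        _ ≤ n a * log (1 - p a) := by gcongr; exact one_sub_inv_le_log_of_pos h₀
    · calc n a * log (1 - p a) ≤ n a * (1 - p a - 1) := by
            gcongr; exact log_le_sub_one_of_pos h₀
        _ = -(n a * p a) := by ring
  refine ((continuous_exp.tendsto _).comp hlog).congr' ?_
  filter_upwards [hp_lt] with a ha
  simp only [Function.comp_apply, exp_nat_mul, exp_log (sub_pos.2 ha)]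

theorem tendsto_binomialProb_poissonProb (hn : Tendsto n l atTop)
    (hr : Tendsto (fun a => n a * p a) l (𝓝 r)) (k : ℕ) :
    Tendsto (fun a => binomialProb (n a) (p a) k) l (𝓝 (poissonProb r k)) := by
  have hp := tendsto_zero_of_tendsto_natCast_mul hn hr
  have hequiv : (fun a => ((n a).choose k : ℝ) * p a ^ k) ~[l]
      (fun a => (n a * p a) ^ k / k !) :=
    calc _ ~[l] (fun a => (n a : ℝ) ^ k / k ! * p a ^ k) :=
          ((isEquivalent_choose k).comp_tendsto hn).mul IsEquivalent.refl
      _ = _ := by ext a; ring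
  have hchoose : Tendsto (fun a => ((n a).choose k : ℝ) * p a ^ k) l (𝓝 (r ^ k / k !)) :=
    hequiv.tendsto_nhds_iff.2 ((hr.pow k).div_const _)
  have hp_lt : ∀ᶠ a in l, p a < 1 := hp.eventually (gt_mem_nhds one_pos)
  have hrest : Tendsto (fun a => (1 - p a) ^ (n a - k)) l (𝓝 (exp (-r))) := by
    have hk : Tendsto (fun a => (1 - p a) ^ k) l (𝓝 1) := by
      simpa using ((tendsto_const_nhds (x := (1 : ℝ))).sub hp).pow k
    refine (div_one (exp (-r)) ▸ (tendsto_one_sub_pow_exp hn hr).div hk one_ne_zero).congr' ?_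
    filter_upwards [hn.eventually_ge_atTop k, hp_lt] with a hka ha
    rw [Pi.div_apply, pow_sub₀ _ (sub_pos.2 ha).ne' hka, div_eq_mul_inv]
  exact hchoose.mul hrest

theorem tendsto_sum_binomialProb_mul (hn : Tendsto n l atTop)
    (hr : Tendsto (fun a => n a * p a) l (𝓝 r)) (hp₀ : ∀ᶠ a in l, 0 ≤ p a)
    {g : ℕ → ℝ} {C c : ℝ} (hg : ∀ k, |g k| ≤ C * c ^ k) :
    Tendsto (fun a => ∑ k ∈ range (n a + 1), binomialProb (n a) (p a) k * g k) l
      (𝓝 (∑' k, poissonProb r k * g k)) := by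
  have hsum_eq (a : α) : ∑ k ∈ range (n a + 1), binomialProb (n a) (p a) k * g k
      = ∑' k, binomialProb (n a) (p a) k * g k := by
    refine (tsum_eq_sum fun k hk => ?_).symm
    rw [binomialProb_eq_zero_of_lt _ (by simpa using hk), zero_mul]
  simp only [hsum_eq]
  have hp₁ : ∀ᶠ a in l, p a ≤ 1 :=
    (tendsto_zero_of_tendsto_natCast_mul hn hr).eventually (ge_mem_nhds one_pos)
  have hR : ∀ᶠ a in l, n a * p a ≤ r + 1 := hr.eventually (ge_mem_nhds (lt_add_one r))
  refine tendsto_tsum_of_dominated_convergence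
    ((summable_pow_div_factorial ((r + 1) * c)).mul_left C)
    (fun k => (tendsto_binomialProb_poissonProb hn hr k).mul_const (g k)) ?_
  filter_upwards [hp₀, hp₁, hR] with a h₀ h₁ hR k
  have hnp : 0 ≤ n a * p a := by positivity
  rw [norm_mul, Real.norm_of_nonneg (binomialProb_nonneg h₀ h₁ k), Real.norm_eq_abs]
  have hr₀ : 0 ≤ r + 1 := hnp.trans hR
  calc binomialProb (n a) (p a) k * |g k| ≤ (r + 1) ^ k / k ! * (C * c ^ k) :=
        mul_le_mul ((binomialProb_le h₀ h₁ k).trans (by gcongr)) (hg k) (abs_nonneg _)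
          (by positivity)
    _ = C * (((r + 1) * c) ^ k / k !) := by rw [mul_pow]; ring

end PoissonLimit

lemma abs_logb_two_factorial_le (k : ℕ) : |logb 2 (k ! : ℝ)| ≤ 4 ^ k := by
  have hpos : (0 : ℝ) < k ! := by exact_mod_cast k.factorial_pos
  have hfac : k ! ≤ 2 ^ (k * k) :=
    calc k ! ≤ k ^ k := Nat.factorial_le_pow k
      _ ≤ (2 ^ k) ^ k := Nat.pow_le_pow_left Nat.lt_two_pow_self.le k
      _ = 2 ^ (k * k) := (pow_mul 2 k k).symm
  have hsq : logb 2 (k ! : ℝ) ≤ k * k := by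
    rw [logb_le_iff_le_rpow one_lt_two hpos, ← Nat.cast_mul, rpow_natCast]
    exact_mod_cast hfac
  have hk : (k : ℝ) * k ≤ 4 ^ k := by
    have : (k : ℝ) ≤ 2 ^ k := by exact_mod_cast Nat.lt_two_pow_self.le
    calc (k : ℝ) * k ≤ 2 ^ k * 2 ^ k := by gcongr
      _ = 4 ^ k := by rw [← mul_pow]; norm_num
  rw [abs_of_nonneg (logb_nonneg one_lt_two (Nat.one_le_cast.2 k.factorial_pos))]
  exact hsq.trans hk

/-- Poisson approximation: for `S = ⌊γQ⌋` and `B ~ Bin(S, 1/Q)`,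
`E[log₂(B!)] → E[log₂(P!)]` for `P ~ Poisson(γ)` as `Q → ∞`. -/
theorem binomial_to_poisson_log_factorial (γ : ℝ) (hγ : 0 < γ) :
    Tendsto (fun Q : ℕ =>
        ∑ i ∈ Finset.range (⌊γ * Q⌋₊ + 1),
          ((⌊γ * Q⌋₊).choose i : ℝ) * (1 / Q) ^ i * (1 - 1 / Q) ^ (⌊γ * Q⌋₊ - i) *
            Real.logb 2 (Nat.factorial i))
      atTop
      (nhds (∑' i : ℕ,
        γ ^ i / (Nat.factorial i) * Real.exp (-γ) * Real.logb 2 (Nat.factorial i))) := by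
  have hn : Tendsto (fun Q : ℕ => ⌊γ * Q⌋₊) atTop atTop := tendsto_nat_floor_mul_atTop γ hγ
  have hr : Tendsto (fun Q : ℕ => (⌊γ * Q⌋₊ : ℝ) * (1 / Q)) atTop (𝓝 γ) := by
    simpa only [mul_one_div, Function.comp_def] using
      (tendsto_nat_floor_mul_div_atTop hγ.le).comp tendsto_natCast_atTop_atTop
  exact tendsto_sum_binomialProb_mul hn hr (.of_forall fun Q => by positivity)
    fun k => (abs_logb_two_factorial_le k).trans_eq (one_mul _).symm
end
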